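/- Let C[-] be a single-hole ⊥-context and V a value such that C[⊥] is an approximant. If C[V] v-reduces in one step to N, then there exists a value V' such that V v-reduces in one step to V' and N = C[V']. -/
import Mathlib



/-- λ-terms possibly containing the constant ⊥ (Λ⊥). Pure λ-terms are those
satisfying `NoBot`. Variables are natural numbers. -/
inductive Tm : Type
  | var : ℕ → Tm
  | lam : ℕ → Tm → Tm
  | app : Tm → Tm → Tm
  | bot : Tm
deriving DecidableEq

namespace Tm

/-- Values of Λ⊥: ⊥, variables and abstractions. -/
def IsVal : Tm → Prop
  | var _ => True
  | lam _ _ => True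
  | bot => True
  | app _ _ => False

/-- A term is a pure λ-term when it contains no occurrence of ⊥. -/
def NoBot : Tm → Prop
  | var _ => True
  | lam _ M => NoBot M
  | app M N => NoBot M ∧ NoBot N
  | bot => False

/-- `FV x M` : the variable `x` occurs free in `M`. -/
inductive FV : ℕ → Tm → Prop
  | var : ∀ x, FV x (var x)
  | lam : ∀ {x y M}, x ≠ y → FV x M → FV x (lam y M)
  | appL : ∀ {x M N}, FV x M → FV x (app M N)
  | appR : ∀ {x M N}, FV x N → FV x (app M N)

/-- Capture-avoiding substitution `M[x := N]` (bound variables are assumed to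
be suitably renamed, so we substitute naively under binders `≠ x`). -/
def subst : Tm → ℕ → Tm → Tm
  | var y, x, N => if y = x then N else var y
  | lam y P, x, N => if y = x then lam y P else lam y (subst P x N)
  | app P Q, x, N => app (subst P x N) (subst Q x N)
  | bot, _, _ => bot

/-- The v-reduction: contextual closure of the rules β_v, σ₁ and σ₃. -/
inductive Step : Tm → Tm → Prop
  | beta : ∀ {x M V}, IsVal V → Step (app (lam x M) V) (subst M x V)
  | sigma1 : ∀ {x M N P}, ¬ FV x P →
      Step (app (app (lam x M) N) P) (app (lam x (app M P)) N)
  | sigma3 : ∀ {x V M N}, IsVal V → ¬ FV x V →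
      Step (app V (app (lam x M) N)) (app (lam x (app V M)) N)
  | appL : ∀ {M M' N}, Step M M' → Step (app M N) (app M' N)
  | appR : ∀ {M N N'}, Step N N' → Step (app M N) (app M N')
  | lam : ∀ {x M M'}, Step M M' → Step (lam x M) (lam x M')

/-- The σ-reduction: contextual closure of the rules σ₁ and σ₃ only. -/
inductive SStep : Tm → Tm → Prop
  | sigma1 : ∀ {x M N P}, ¬ FV x P →
      SStep (app (app (lam x M) N) P) (app (lam x (app M P)) N)
  | sigma3 : ∀ {x V M N}, IsVal V → ¬ FV x V →
      SStep (app V (app (lam x M) N)) (app (lam x (app V M)) N)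
  | appL : ∀ {M M' N}, SStep M M' → SStep (app M N) (app M' N)
  | appR : ∀ {M N N'}, SStep N N' → SStep (app M N) (app M N')
  | lam : ∀ {x M M'}, SStep M M' → SStep (lam x M) (lam x M')

/-- A term is in v-normal form when no v-reduction step applies. -/
def VNormal (M : Tm) : Prop := ∀ N, ¬ Step M N

mutual
  /-- Grammar of v-normal forms: general normal forms `G ::= H | R`. -/
  inductive IsG : Tm → Prop
    | ofH : ∀ {t}, IsH t → IsG t
    | ofR : ∀ {t}, IsR t → IsG t
  /-- head normal forms `H ::= x | λx.G | x H G₁ ⋯ G_k`. -/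
  inductive IsH : Tm → Prop
    | var : ∀ x, IsH (var x)
    | lam : ∀ {x t}, IsG t → IsH (lam x t)
    | spine : ∀ {t}, IsHSpine t → IsH t
  /-- terms of the shape `x H G₁ ⋯ G_k` (k ≥ 0). -/
  inductive IsHSpine : Tm → Prop
    | head : ∀ {x h}, IsH h → IsHSpine (app (var x) h)
    | app : ∀ {t g}, IsHSpine t → IsG g → IsHSpine (app t g)
  /-- redex-like normal forms `R ::= (λx.G)(y H G₁ ⋯ G_k)`. -/
  inductive IsR : Tm → Prop
    | mk : ∀ {x t s}, IsG t → IsHSpine s → IsR (app (lam x t) s)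
end

mutual
  /-- The set 𝒜 of approximants: `A ::= B | C`. -/
  inductive IsA : Tm → Prop
    | ofB : ∀ {t}, IsB t → IsA t
    | ofC : ∀ {t}, IsC t → IsA t
  /-- `B ::= x | λx.A | ⊥ | x B A₁ ⋯ A_k`. -/
  inductive IsB : Tm → Prop
    | var : ∀ x, IsB (var x)
    | lam : ∀ {x t}, IsA t → IsB (lam x t)
    | bot : IsB bot
    | spine : ∀ {t}, IsBSpine t → IsB t
  /-- terms of the shape `x B A₁ ⋯ A_k` (k ≥ 0). -/
  inductive IsBSpine : Tm → Prop
    | head : ∀ {x b}, IsB b → IsBSpine (app (var x) b)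
    | app : ∀ {t a}, IsBSpine t → IsA a → IsBSpine (app t a)
  /-- `C ::= (λx.A)(y B A₁ ⋯ A_k)`. -/
  inductive IsC : Tm → Prop
    | mk : ∀ {x t s}, IsA t → IsBSpine s → IsC (app (lam x t) s)
end

/-- The order ⊑ on Λ⊥: context-closed preorder generated by ⊥ ⊑ x, ⊥ ⊑ λx.M. -/
inductive LE : Tm → Tm → Prop
  | refl : ∀ t, LE t t
  | botVar : ∀ x, LE bot (var x)
  | botLam : ∀ x t, LE bot (lam x t)
  | lam : ∀ {x s t}, LE s t → LE (lam x s) (lam x t)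
  | app : ∀ {s₁ s₂ t₁ t₂}, LE s₁ t₁ → LE s₂ t₂ → LE (app s₁ s₂) (app t₁ t₂)

/-- The set of approximants of a term:
`𝒜(M) = { A ∈ 𝒜 | ∃ N, M →*_v N and A ⊑ N }`. -/
def ApproxOf (M : Tm) : Set Tm :=
  {A | IsA A ∧ ∃ N, Relation.ReflTransGen Step M N ∧ LE A N}

end Tm

/-- Single-hole (⊥-)contexts. -/
inductive Ctx : Type
  | hole : Ctx
  | appL : Ctx → Tm → Ctx
  | appR : Tm → Ctx → Ctx
  | lam : ℕ → Ctx → Ctx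

/-- Filling the hole of a context with a term (possibly capturing variables). -/
def Ctx.fill : Ctx → Tm → Tm
  | .hole, M => M
  | .appL C N, M => .app (C.fill M) N
  | .appR N C, M => .app N (C.fill M)
  | .lam x C, M => .lam x (C.fill M)

/-- Resource terms of the CbV resource calculus: resource values are
variables `var x` and abstractions `lam x t`; simple terms are applications
`app s t` and bags `bag [v₁,…,v_k]` (finite multisets of values, represented
as lists considered up to permutation by the rules below). -/
inductive RTm : Type
  | var : ℕ → RTm
  | lam : ℕ → RTm → RTm
  | app : RTm → RTm → RTm
  | bag : List RTm → RTm

namespace RTm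

/-- Resource values. -/
def IsRVal : RTm → Prop
  | var _ => True
  | lam _ _ => True
  | _ => False

/-- Simple terms (applications and bags). -/
def IsSimple : RTm → Prop
  | app _ _ => True
  | bag _ => True
  | _ => False

/-- Free-variable occurrence predicate for resource terms. -/
inductive RFV : ℕ → RTm → Prop
  | var : ∀ x, RFV x (var x)
  | lam : ∀ {x y t}, x ≠ y → RFV x t → RFV x (lam y t)
  | appL : ∀ {x s t}, RFV x s → RFV x (app s t)
  | appR : ∀ {x s t}, RFV x t → RFV x (app s t)
  | bag : ∀ {x t ts}, t ∈ ts → RFV x t → RFV x (bag ts)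

/-- Linear substitution: `LSubst e x vs e'` holds iff `e'` is one of the terms
obtained from `e` by substituting the values `vs` bijectively for the free
occurrences of `x` in `e` (no such `e'` exists if the count mismatches). -/
inductive LSubst : RTm → ℕ → List RTm → RTm → Prop
  | varEq : ∀ x v, LSubst (var x) x [v] v
  | varNe : ∀ {x y}, y ≠ x → LSubst (var y) x [] (var y)
  | lamEq : ∀ x t, LSubst (lam x t) x [] (lam x t)
  | lamNe : ∀ {x y t vs t'}, y ≠ x → LSubst t x vs t' →
      LSubst (lam y t) x vs (lam y t')
  | app : ∀ {s t x us ws vs s' t'}, LSubst s x us s' → LSubst t x ws t' →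
      vs.Perm (us ++ ws) → LSubst (app s t) x vs (app s' t')
  | bagNil : ∀ x, LSubst (bag []) x [] (bag [])
  | bagCons : ∀ {v ts x us ws vs v' ts'}, LSubst v x us v' →
      LSubst (bag ts) x ws (bag ts') → vs.Perm (us ++ ws) →
      LSubst (bag (v :: ts)) x vs (bag (v' :: ts'))

/-- One step of resource reduction at the level of terms, producing a
(finite) set of resource terms: rules β_r, 0, σ₁, σ₃, contextually closed. -/
inductive RStep : RTm → Set RTm → Prop
  | beta : ∀ {x t vs}, (∀ v ∈ vs, IsRVal v) →
      RStep (app (bag [lam x t]) (bag vs)) {t' | LSubst t x vs t'}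
  | zero : ∀ {vs t}, (∀ v ∈ vs, IsRVal v) → vs.length ≠ 1 →
      RStep (app (bag vs) t) ∅
  | sigma1 : ∀ {x t s₁ s₂}, ¬ RFV x s₁ →
      RStep (app (app (bag [lam x t]) s₁) s₂) {app (bag [lam x (app t s₂)]) s₁}
  | sigma3 : ∀ {v x t s}, IsRVal v → ¬ RFV x v →
      RStep (app (bag [v]) (app (bag [lam x t]) s))
        {app (bag [lam x (app (bag [v]) t)]) s}
  | appL : ∀ {s S t}, RStep s S → RStep (app s t) {u | ∃ s' ∈ S, u = app s' t}
  | appR : ∀ {s t T}, RStep t T → RStep (app s t) {u | ∃ t' ∈ T, u = app s t'}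
  | lam : ∀ {x t T}, RStep t T → RStep (lam x t) {u | ∃ t' ∈ T, u = lam x t'}
  | bagHead : ∀ {v V ts}, RStep v V →
      RStep (bag (v :: ts)) {u | ∃ v' ∈ V, u = bag (v' :: ts)}
  | bagTail : ∀ {v ts T}, RStep (bag ts) T →
      RStep (bag (v :: ts)) {u | ∃ ts', bag ts' ∈ T ∧ u = bag (v :: ts')}

/-- The resource reduction →_r lifted to sets of resource terms:
`{e} ∪ E₂ →_r E₁ ∪ E₂` whenever `e →_r E₁` and `e ∉ E₂`. -/
inductive RSetStep : Set RTm → Set RTm → Prop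
  | mk : ∀ {e E₁ E₂}, RStep e E₁ → e ∉ E₂ → RSetStep (insert e E₂) (E₁ ∪ E₂)

/-- A set of resource terms is →_r-normal when no set-level step applies. -/
def RSetNormal (S : Set RTm) : Prop := ∀ S', ¬ RSetStep S S'

/-- `NF(E) = ⋃_{e ∈ E} nf_r(e)` : the set of resource terms occurring in the
(unique, by confluence and strong normalization) →_r-normal form of some
element of `E`. -/
def NF (E : Set RTm) : Set RTm :=
  {t | ∃ e ∈ E, ∃ S, Relation.ReflTransGen RSetStep {e} S ∧ RSetNormal S ∧ t ∈ S}

/-- `HasBRS t` : `t` contains a β_r-, σ₁- or σ₃-redex (0-redexes not counted). -/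
inductive HasBRS : RTm → Prop
  | beta : ∀ {x t vs}, (∀ v ∈ vs, IsRVal v) →
      HasBRS (app (bag [lam x t]) (bag vs))
  | sigma1 : ∀ {x t s₁ s₂}, ¬ RFV x s₁ → HasBRS (app (app (bag [lam x t]) s₁) s₂)
  | sigma3 : ∀ {v x t s}, IsRVal v → ¬ RFV x v →
      HasBRS (app (bag [v]) (app (bag [lam x t]) s))
  | appL : ∀ {s t}, HasBRS s → HasBRS (app s t)
  | appR : ∀ {s t}, HasBRS t → HasBRS (app s t)
  | lam : ∀ {x t}, HasBRS t → HasBRS (lam x t)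
  | bag : ∀ {t ts}, t ∈ ts → HasBRS t → HasBRS (bag ts)

mutual
  /-- The height of a resource term. -/
  def height : RTm → ℕ
    | var _ => 0
    | lam _ t => height t + 1
    | app s t => max (height s) (height t) + 1
    | bag ts => heightList ts + 1
  def heightList : List RTm → ℕ
    | [] => 0
    | t :: ts => max (height t) (heightList ts)
end

/-- The height of a set of resource terms (possibly infinite). -/
noncomputable def hSet (E : Set RTm) : ℕ∞ := ⨆ t ∈ E, (height t : ℕ∞)

/-- The coherence relation ¨ on resource terms. -/
inductive Coh : RTm → RTm → Prop
  | var : ∀ x, Coh (var x) (var x)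
  | lam : ∀ {x s t}, Coh s t → Coh (lam x s) (lam x t)
  | bag : ∀ {us vs}, (∀ a ∈ us ++ vs, ∀ b ∈ us ++ vs, Coh a b) →
      Coh (bag us) (bag vs)
  | app : ∀ {s₁ s₂ t₁ t₂}, Coh s₁ s₂ → Coh t₁ t₂ → Coh (app s₁ t₁) (app s₂ t₂)

/-- A clique: a set of pairwise coherent resource terms. -/
def Clique (E : Set RTm) : Prop := ∀ s ∈ E, ∀ t ∈ E, Coh s t

/-- A maximal clique: no resource term can be added keeping it a clique. -/
def MaxClique (E : Set RTm) : Prop :=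
  Clique E ∧ ∀ e : RTm, Clique (insert e E) → e ∈ E

end RTm
/-- The Taylor expansion: `InT M t` iff the simple term `t` belongs to 𝒯(M). -/
inductive InT : Tm → RTm → Prop
  | var : ∀ x n, InT (.var x) (.bag (List.replicate n (.var x)))
  | lam : ∀ {x N} (ts : List RTm), (∀ t ∈ ts, InT N t) →
      InT (.lam x N) (.bag (ts.map (RTm.lam x)))
  | app : ∀ {P Q s t}, InT P s → InT Q t → InT (.app P Q) (.app s t)

/-- The Taylor expansion 𝒯(M) of a λ-term, as a set of resource terms. -/
def Taylor (M : Tm) : Set RTm := {t | InT M t}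

/-- The normalized Taylor expansion of an approximant: `InTn A t` iff
`t ∈ 𝒯ⁿᶠ(A)`, following the grammar of approximants. -/
inductive InTn : Tm → RTm → Prop
  | var : ∀ x n, InTn (.var x) (.bag (List.replicate n (.var x)))
  | bot : InTn .bot (.bag [])
  | lam : ∀ {x A} (ts : List RTm), (∀ t ∈ ts, InTn A t) →
      InTn (.lam x A) (.bag (ts.map (RTm.lam x)))
  | spineHead : ∀ {x B t}, InTn B t →
      InTn (.app (.var x) B) (.app (.bag [.var x]) t)
  | spineApp : ∀ {S A s t}, Tm.IsBSpine S → InTn S s → InTn A t →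
      InTn (.app S A) (.app s t)
  | redex : ∀ {x A Q s t}, InTn A s → Tm.IsBSpine Q → InTn Q t →
      InTn (.app (.lam x A) Q) (.app (.bag [.lam x s]) t)

/-- The normalized Taylor expansion 𝒯ⁿᶠ(A) of an approximant. -/
def TaylorN (A : Tm) : Set RTm := {t | InTn A t}

namespace FillStepAux

open Tm

/-- Filling a hole with ⊥ never yields a variable. -/
lemma fill_bot_ne_var (C : Ctx) (y : ℕ) : C.fill Tm.bot ≠ Tm.var y := by
  cases C <;> simp [Ctx.fill]

/-- A term that is a B-spine is an application whose head is not a lambda. -/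
lemma spine_term_shape {s : Tm} (hs : Tm.IsBSpine s) :
    ∃ a b, s = Tm.app a b ∧ ∀ x M, a ≠ Tm.lam x M := by
  cases hs with
  | head hb => exact ⟨_, _, rfl, fun _ _ h => by cases h⟩
  | app ht ha =>
      obtain ⟨a', b', rfl, -⟩ := spine_term_shape ht
      exact ⟨_, _, rfl, fun _ _ h => by cases h⟩

/-- If `C[⊥]` is a B-spine then `C[V]` is an application with non-lambda head. -/
lemma spine_shape : ∀ (C : Ctx), Tm.IsBSpine (C.fill Tm.bot) → ∀ (V : Tm),
    ∃ a b, C.fill V = Tm.app a b ∧ ∀ x M, a ≠ Tm.lam x M := by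
  intro C hs V
  cases C with
  | hole => cases hs
  | lam x C => cases hs
  | appL C t =>
      simp only [Ctx.fill] at hs
      generalize hL : C.fill Tm.bot = L at hs
      cases hs with
      | head hb => exact absurd hL (fill_bot_ne_var C _)
      | app ht ha =>
          subst hL
          obtain ⟨a, b, he, -⟩ := spine_shape C ht V
          exact ⟨C.fill V, t, rfl, fun x M h => by rw [he] at h; cases h⟩
  | appR s C =>
      simp only [Ctx.fill] at hs
      cases hs with
      | head hb => exact ⟨_, _, rfl, fun _ _ h => by cases h⟩
      | app ht ha =>
          obtain ⟨a, b, rfl, -⟩ := spine_term_shape ht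
          exact ⟨_, _, rfl, fun _ _ h => by cases h⟩

/-- Approximants (and B-spines) are v-normal. -/
lemma step_not : ∀ {t N : Tm}, Tm.Step t N →
    (Tm.IsA t → False) ∧ (Tm.IsBSpine t → False) := by
  intro t N h
  induction h with
  | @beta x M V hv =>
      refine ⟨?_, ?_⟩
      · rintro (⟨hb⟩ | ⟨hc⟩)
        · cases hb with
          | spine hs =>
              cases hs with
              | app ht _ => cases ht
        · cases hc with
          | mk hA hs =>
              obtain ⟨a, b, rfl, -⟩ := spine_term_shape hs
              exact hv
      · intro hs
        cases hs with
        | app ht _ => cases ht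
  | sigma1 hfv =>
      have inner : ∀ {M N P : Tm} {y : ℕ},
          Tm.IsBSpine (Tm.app (Tm.app (Tm.lam y M) N) P) → False := by
        intro M N P y hs
        cases hs with
        | app ht _ =>
            cases ht with
            | app ht' _ => cases ht'
      refine ⟨?_, fun hs => inner hs⟩
      rintro (⟨hb⟩ | ⟨hc⟩)
      · cases hb with
        | spine hs => exact inner hs
      · cases hc
  | @sigma3 x V M N hv hfv =>
      have inner : Tm.IsBSpine (Tm.app V (Tm.app (Tm.lam x M) N)) → False := by
        intro hs
        cases hs with
        | head hb' =>
            cases hb' with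
            | spine hs' =>
                cases hs' with
                | app ht' _ => cases ht'
        | app ht _ =>
            obtain ⟨a, b, he, -⟩ := spine_term_shape ht
            rw [he] at hv
            exact hv
      refine ⟨?_, inner⟩
      rintro (⟨hb⟩ | ⟨hc⟩)
      · cases hb with
        | spine hs => exact inner hs
      · cases hc with
        | mk _ hs =>
            cases hs with
            | app ht' _ => cases ht'
  | @appL M M' N0 hM ih =>
      have inner : ∀ {N : Tm}, Tm.IsBSpine (Tm.app M N) → False := by
        intro N hs
        cases hs with
        | head => exact ih.1 (.ofB (.var _))
        | app ht _ => exact ih.2 ht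
      refine ⟨?_, inner⟩
      rintro (⟨hb⟩ | ⟨hc⟩)
      · cases hb with
        | spine hs => exact inner hs
      · cases hc with
        | mk hA _ => exact ih.1 (.ofB (.lam hA))
  | @appR M0 N' N'' hN ih =>
      have inner : ∀ {M : Tm}, Tm.IsBSpine (Tm.app M N') → False := by
        intro M hs
        cases hs with
        | head hb' => exact ih.1 (.ofB hb')
        | app _ ha => exact ih.1 ha
      refine ⟨?_, inner⟩
      rintro (⟨hb⟩ | ⟨hc⟩)
      · cases hb with
        | spine hs => exact inner hs
      · cases hc with
        | mk _ hs => exact ih.2 hs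
  | lam hM ih =>
      refine ⟨?_, fun hs => by cases hs⟩
      rintro (⟨hb⟩ | ⟨hc⟩)
      · cases hb with
        | lam hA => exact ih.1 hA
        | spine hs => cases hs
      · cases hc

end FillStepAux

namespace FillStepAux

lemma fill_eq_lam : ∀ (C : Ctx) (x : ℕ) (A : Tm), C.fill Tm.bot = Tm.lam x A →
    ∃ C', C = Ctx.lam x C' := by
  intro C x A h
  cases C with
  | hole => simp [Ctx.fill] at h
  | appL C t => simp [Ctx.fill] at h
  | appR t C => simp [Ctx.fill] at h
  | lam y C =>
      simp only [Ctx.fill] at h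
      injection h with h1 h2
      subst h1
      exact ⟨C, rfl⟩

lemma fill_eq_bot : ∀ (C : Ctx), C.fill Tm.bot = Tm.bot → C = Ctx.hole := by
  intro C h
  cases C <;> simp [Ctx.fill] at h ⊢

lemma B_shape (C : Ctx) (hb : Tm.IsB (C.fill Tm.bot)) (V : Tm) (hV : V.IsVal) :
    ∀ x M N0, C.fill V ≠ Tm.app (Tm.lam x M) N0 := by
  intro x M N0 heq
  generalize hL : C.fill Tm.bot = L at hb
  cases hb with
  | var y => exact fill_bot_ne_var C _ hL
  | lam hA =>
      obtain ⟨C', rfl⟩ := fill_eq_lam C _ _ hL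
      simp [Ctx.fill] at heq
  | bot =>
      have hC := fill_eq_bot C hL
      subst hC
      simp only [Ctx.fill] at heq
      subst heq
      exact hV
  | spine hs =>
      subst hL
      obtain ⟨a, b, he, hnl⟩ := spine_shape C hs V
      rw [he] at heq
      injection heq with h1 h2
      exact hnl _ _ h1

lemma main : ∀ (C : Ctx) (V N : Tm), V.IsVal → Tm.IsA (C.fill Tm.bot) →
    Tm.Step (C.fill V) N →
    ∃ V', Tm.IsVal V' ∧ Tm.Step V V' ∧ N = C.fill V' := by
  intro C
  induction C with
  | hole =>
      intro V N hV hA h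
      simp only [Ctx.fill] at h ⊢
      cases V with
      | var x => cases h
      | bot => cases h
      | app a b => exact hV.elim
      | lam x M =>
          cases h with
          | lam hM => refine ⟨_, ?_, Tm.Step.lam hM, rfl⟩; trivial
  | lam x C ih =>
      intro V N hV hA h
      simp only [Ctx.fill] at hA h
      have hA' : Tm.IsA (C.fill Tm.bot) := by
        cases hA with
        | ofB hb =>
            cases hb with
            | lam hA2 => exact hA2
            | spine hs => cases hs
        | ofC hc => cases hc
      cases h with
      | lam hM =>
          obtain ⟨V', h1, h2, hEq⟩ := ih V _ hV hA' hM
          exact ⟨V', h1, h2, by simp only [Ctx.fill]; rw [hEq]⟩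
  | appL C t ih =>
      intro V N hV hA h
      simp only [Ctx.fill] at hA h
      generalize hL : C.fill Tm.bot = L at hA
      rcases hA with ⟨hb⟩ | ⟨hc⟩
      · cases hb with
        | spine hs =>
            cases hs with
            | head hb2 => exact absurd hL (fill_bot_ne_var C _)
            | app ht ha =>
                subst hL
                obtain ⟨a, b, he, hnl⟩ := spine_shape C ht V
                generalize hF : C.fill V = F at h
                cases h with
                | beta hv => cases hF.symm.trans he
                | sigma1 hfv =>
                    injection hF.symm.trans he with h1 h2
                    exact (hnl _ _ h1.symm).elim
                | sigma3 hv hfv =>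
                    subst hF
                    rw [he] at hv
                    exact hv.elim
                | appL hM =>
                    subst hF
                    obtain ⟨V', h1, h2, hEq⟩ := ih V _ hV (.ofB (.spine ht)) hM
                    exact ⟨V', h1, h2, by simp only [Ctx.fill]; rw [hEq]⟩
                | appR hN => exact (((step_not hN).1) ha).elim
      · cases hc with
        | @mk x' A' s' hA2 hs2 =>
            obtain ⟨C', rfl⟩ := fill_eq_lam C _ _ hL
            simp only [Ctx.fill] at h hL
            injection hL with hx hA3
            have hA' : Tm.IsA ((Ctx.lam x' C').fill Tm.bot) := by
              simp only [Ctx.fill]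
              exact .ofB (.lam (hA3 ▸ hA2))
            cases h with
            | beta hv =>
                obtain ⟨a, b, heq, -⟩ := spine_term_shape hs2
                rw [heq] at hv
                exact hv.elim
            | sigma3 hv hfv =>
                obtain ⟨a, b, heq, hnl⟩ := spine_term_shape hs2
                injection heq with h1 h2
                exact (hnl _ _ h1.symm).elim
            | appL hM =>
                obtain ⟨V', h1, h2, hEq⟩ := ih V _ hV hA' hM
                exact ⟨V', h1, h2, by simp only [Ctx.fill] at hEq ⊢; rw [hEq]⟩
            | appR hN => exact (((step_not hN).2) hs2).elim
  | appR s C ih =>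
      intro V N hV hA h
      simp only [Ctx.fill] at hA h
      rcases hA with ⟨hb⟩ | ⟨hc⟩
      · cases hb with
        | spine hs =>
            cases hs with
            | head hb2 =>
                generalize hF : C.fill V = F at h
                cases h with
                | sigma3 hv hfv => exact (B_shape C hb2 V hV _ _ _ hF).elim
                | appL hM => cases hM
                | appR hN =>
                    subst hF
                    obtain ⟨V', h1, h2, hEq⟩ := ih V _ hV (.ofB hb2) hN
                    exact ⟨V', h1, h2, by simp only [Ctx.fill]; rw [hEq]⟩
            | app ht ha =>
                obtain ⟨a, b, heq, hnl⟩ := spine_term_shape ht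
                subst heq
                generalize hF : C.fill V = F at h
                cases h with
                | sigma1 hfv => exact (hnl _ _ rfl).elim
                | sigma3 hv hfv => exact hv.elim
                | appL hM => exact (((step_not hM).2) ht).elim
                | appR hN =>
                    subst hF
                    obtain ⟨V', h1, h2, hEq⟩ := ih V _ hV ha hN
                    exact ⟨V', h1, h2, by simp only [Ctx.fill]; rw [hEq]⟩
      · cases hc with
        | mk hA2 hs2 =>
            obtain ⟨a, b, he, hnl⟩ := spine_shape C hs2 V
            rw [he] at h
            cases h with
            | beta hv => exact hv.elim
            | sigma3 hv hfv => exact (hnl _ _ rfl).elim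
            | appL hM => exact (((step_not hM).1) (.ofB (.lam hA2))).elim
            | @appR _ _ N' hN =>
                have hN2 : Tm.Step (C.fill V) N' := by rw [he]; exact hN
                obtain ⟨V', h1, h2, hEq⟩ := ih V _ hV (.ofB (.spine hs2)) hN2
                exact ⟨V', h1, h2, by simp only [Ctx.fill]; rw [hEq]⟩

end FillStepAux

/-- if `C[⊥]` is an approximant and `C[V]` v-reduces in one step
to `N`, then `N = C[V']` for some value `V'` with `V →_v V'`. -/
theorem fill_step (C : Ctx) (V N : Tm) (hV : V.IsVal)
    (hA : Tm.IsA (C.fill Tm.bot)) (h : Tm.Step (C.fill V) N) :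
    ∃ V', Tm.IsVal V' ∧ Tm.Step V V' ∧ N = C.fill V' := FillStepAux.main C V N hV hA h
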